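/- The infinite dihedral group D∞ (in Mathlib, DihedralGroup 0) has trivial Frattini subgroup: F(D∞) = {1}. -/

import Mathlib

open DihedralGroup Subgroup

/-- A subgroup of prime index is maximal. -/
lemma isCoatom_of_index_prime' {G : Type*} [Group G] {H : Subgroup G} {p : ℕ}
    (hp : p.Prime) (h : H.index = p) : IsCoatom H := by
  constructor
  · intro ht
    rw [ht, Subgroup.index_top] at h
    exact hp.ne_one h.symm
  · intro K hK
    have h1 : H ≤ K := hK.le
    have hmul := Subgroup.relIndex_mul_index h1
    rw [h] at hmul
    have hdvd : K.index ∣ p := ⟨H.relIndex K, hmul.symm.trans (mul_comm _ _)⟩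
    rcases (Nat.Prime.eq_one_or_self_of_dvd hp _ hdvd) with h2 | h2
    · exact Subgroup.index_eq_one.mp h2
    · exfalso
      rw [h2] at hmul
      have hone : H.relIndex K = 1 :=
        Nat.eq_of_mul_eq_mul_right hp.pos (by rw [hmul, one_mul])
      exact hK.ne ((le_antisymm h1 (Subgroup.relIndex_eq_one.mp hone)))

/-- The sign homomorphism from the dihedral group to `ℤˣ`. -/
def dihedralSign (n : ℕ) : DihedralGroup n →* ℤˣ where
  toFun x := match x with
    | .r _ => 1
    | .sr _ => -1
  map_one' := rfl
  map_mul' := by rintro (i | i) (j | j) <;> simp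

/-- The reduction ring hom `ZMod 0 →+* ZMod n`. -/
def zmodRed (n : ℕ) : ZMod 0 →+* ZMod n := ZMod.castHom (dvd_zero n) (ZMod n)

/-- Reduction homomorphism from the infinite dihedral group to `DihedralGroup n`. -/
def dihedralProj (n : ℕ) : DihedralGroup 0 →* DihedralGroup n where
  toFun x := match x with
    | .r i => .r (zmodRed n i)
    | .sr i => .sr (zmodRed n i)
  map_one' := by
    show DihedralGroup.r (zmodRed n 0) = 1
    rw [map_zero]
    rfl
  map_mul' := by
    rintro (i | i) (j | j) <;>
      simp [DihedralGroup.r_mul_r, DihedralGroup.r_mul_sr, DihedralGroup.sr_mul_r,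
        DihedralGroup.sr_mul_sr, map_add, map_sub]

lemma dihedralProj_surjective (n : ℕ) : Function.Surjective (dihedralProj n) := by
  rintro (i | i)
  · obtain ⟨k, hk⟩ := ZMod.ringHom_surjective (zmodRed n) i
    exact ⟨.r k, by simp only [dihedralProj, MonoidHom.coe_mk, OneHom.coe_mk, hk]⟩
  · obtain ⟨k, hk⟩ := ZMod.ringHom_surjective (zmodRed n) i
    exact ⟨.sr k, by simp only [dihedralProj, MonoidHom.coe_mk, OneHom.coe_mk, hk]⟩

lemma mem_zpowers_sr_iff {n : ℕ} (x : DihedralGroup n) :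
    x ∈ Subgroup.zpowers (DihedralGroup.sr 0) ↔ x = 1 ∨ x = DihedralGroup.sr 0 := by
  constructor
  · rintro ⟨k, hk⟩
    have hsq : (DihedralGroup.sr (0 : ZMod n)) ^ (2 : ℤ) = 1 := by
      rw [zpow_two]
      simp [DihedralGroup.one_def, -DihedralGroup.r_zero]
    rcases Int.even_or_odd k with ⟨m, hm⟩ | ⟨m, hm⟩
    · left
      rw [← hk]
      show DihedralGroup.sr 0 ^ k = 1
      rw [hm, ← two_mul, zpow_mul, hsq, one_zpow]
    · right
      rw [← hk]
      show DihedralGroup.sr 0 ^ k = DihedralGroup.sr 0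
      rw [hm, zpow_add, zpow_mul, hsq, one_zpow, one_mul, zpow_one]
  · rintro (rfl | rfl)
    · exact one_mem _
    · exact Subgroup.mem_zpowers _

/-- The index of the rotation subgroup (kernel of the sign map) is 2. -/
lemma index_ker_dihedralSign : (dihedralSign 0).ker.index = 2 := by
  rw [Subgroup.index_ker]
  have hr : (dihedralSign 0).range = ⊤ := by
    rw [eq_top_iff]
    rintro x -
    rcases Int.units_eq_one_or x with rfl | rfl
    · exact ⟨.r 0, rfl⟩
    · exact ⟨.sr 0, rfl⟩
  rw [hr]
  rw [Nat.card_congr (Subgroup.topEquiv (G := ℤˣ)).toEquiv, Nat.card_eq_fintype_card]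
  exact Fintype.card_units_int

lemma index_M (p : ℕ) (hp : p.Prime) :
    ((Subgroup.zpowers (DihedralGroup.sr (0 : ZMod p))).comap (dihedralProj p)).index = p := by
  rw [Subgroup.index_comap_of_surjective _ (dihedralProj_surjective p)]
  have : Fact p.Prime := ⟨hp⟩
  have hcard : Nat.card (Subgroup.zpowers (DihedralGroup.sr (0 : ZMod p))) = 2 := by
    rw [Nat.card_zpowers, DihedralGroup.orderOf_sr]
  have hmi := Subgroup.card_mul_index (Subgroup.zpowers (DihedralGroup.sr (0 : ZMod p)))
  rw [hcard, DihedralGroup.nat_card] at hmi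
  exact Nat.eq_of_mul_eq_mul_left two_pos hmi

/-- The infinite dihedral group has trivial Frattini subgroup. -/
theorem frattini_infinite_dihedral_eq_bot : frattini (DihedralGroup 0) = ⊥ := by
  rw [eq_bot_iff]
  intro x hx
  -- x is in the kernel of the sign map, hence a rotation
  have hR : x ∈ (dihedralSign 0).ker :=
    frattini_le_coatom (isCoatom_of_index_prime' Nat.prime_two index_ker_dihedralSign) hx
  rcases hxr : x with i | i
  · subst hxr
    have hdvd : ∀ p : ℕ, p.Prime → (p : ℤ) ∣ (i : ℤ) := by
      intro p hp
      have hM : DihedralGroup.r i ∈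
          (Subgroup.zpowers (DihedralGroup.sr (0 : ZMod p))).comap (dihedralProj p) :=
        frattini_le_coatom (isCoatom_of_index_prime' hp (index_M p hp)) hx
      have h1 : DihedralGroup.r (zmodRed p i) ∈
          Subgroup.zpowers (DihedralGroup.sr (0 : ZMod p)) := hM
      rw [show zmodRed p i = ((ZMod.cast i : ℤ) : ZMod p) from rfl] at h1
      rcases (mem_zpowers_sr_iff _).mp h1 with h2 | h2
      · rw [DihedralGroup.one_def] at h2
        have h0 : ((ZMod.cast i : ℤ) : ZMod p) = 0 := by injection h2
        exact (ZMod.intCast_zmod_eq_zero_iff_dvd _ p).mp h0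
      · exact absurd h2 (by simp)
    have hj : (i : ℤ) = 0 := by
      by_contra h
      obtain ⟨p, hpgt, hp⟩ := Nat.exists_infinite_primes ((i : ℤ).natAbs + 1)
      have hd : p ∣ (i : ℤ).natAbs := Int.natCast_dvd_natCast.mp (Int.dvd_natAbs.mpr (hdvd p hp))
      have := Nat.le_of_dvd (Int.natAbs_pos.mpr h) hd
      omega
    show DihedralGroup.r i ∈ (⊥ : Subgroup (DihedralGroup 0))
    rw [Subgroup.mem_bot]
    show DihedralGroup.r i = DihedralGroup.r 0
    have hi0 : i = (0 : ZMod 0) := hj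
    rw [hi0]
  · exfalso
    subst hxr
    have h1 : (-1 : ℤˣ) = 1 := hR
    simp at h1
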